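/- Let S be a commutative semiring and H a Hopf S-semialgebra. Then H admits a normalized left integral in H (x ∈ H with h·x = ε(h)·x for all h ∈ H and ε(x) = 1_S) if and only if H admits a normalized right integral in H (y ∈ H with y·h = ε(h)·y for all h ∈ H and ε(y) = 1_S). -/

import Mathlib

/-!
If `x` is a left integral then `𝔞 x` is a right integral: expanding `h = Σ ε(h₁) h₂`,
`𝔞 x · h = Σ 𝔞 (h₁ x) h₂ = 𝔞 x · Σ 𝔞 h₁ h₂ = ε h • 𝔞 x`, using that `𝔞` is an
anti-homomorphism. Symmetrically `𝔞` sends right integrals to left integrals, and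
`ε ∘ 𝔞 = ε` preserves normalization.
-/

open Coalgebra HopfAlgebra

lemma Coalgebra.sum_counit_right_smul {R A ι : Type*} [CommSemiring R] [AddCommMonoid A]
    [Module R A] [Coalgebra R A] {a : A} (𝓡 : Repr R a ι) :
    ∑ i ∈ 𝓡.index, counit (R := R) (𝓡.right i) • 𝓡.left i = a := by
  simpa only [map_sum, TensorProduct.rid_tmul, one_smul] using
    congr(TensorProduct.rid R R A $(sum_tmul_counit_eq (R := R) 𝓡))

namespace HopfAlgebra

variable (S : Type*) {H : Type*} [CommSemiring S] [Semiring H] [HopfAlgebra S H]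

def IsLeftIntegral (x : H) : Prop := ∀ h : H, h * x = counit (R := S) h • x

def IsRightIntegral (y : H) : Prop := ∀ h : H, y * h = counit (R := S) h • y

variable {S}

lemma IsLeftIntegral.isRightIntegral_antipode {x : H} (hx : IsLeftIntegral S x) :
    IsRightIntegral S (antipode S x) := by
  intro h
  let 𝓡 := ℛ S h
  calc antipode S x * h
      = ∑ i ∈ 𝓡.index, antipode S (𝓡.left i * x) * 𝓡.right i := by
        conv_lhs => rw [← sum_counit_smul 𝓡]
        simp only [Finset.mul_sum, hx _, map_smul, smul_mul_assoc, mul_smul_comm]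
    _ = antipode S x * ∑ i ∈ 𝓡.index, antipode S (𝓡.left i) * 𝓡.right i := by
        simp only [antipode_mul_antidistrib, Finset.mul_sum, mul_assoc]
    _ = counit (R := S) h • antipode S x := by
        rw [sum_antipode_mul_eq_smul, mul_smul_comm, mul_one]

lemma IsRightIntegral.isLeftIntegral_antipode {y : H} (hy : IsRightIntegral S y) :
    IsLeftIntegral S (antipode S y) := by
  intro h
  let 𝓡 := ℛ S h
  calc h * antipode S y
      = ∑ i ∈ 𝓡.index, 𝓡.left i * antipode S (y * 𝓡.right i) := by
        conv_lhs => rw [← sum_counit_right_smul 𝓡]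
        simp only [Finset.sum_mul, hy _, map_smul, smul_mul_assoc, mul_smul_comm]
    _ = (∑ i ∈ 𝓡.index, 𝓡.left i * antipode S (𝓡.right i)) * antipode S y := by
        simp only [antipode_mul_antidistrib, Finset.sum_mul, mul_assoc]
    _ = counit (R := S) h • antipode S y := by
        rw [sum_mul_antipode_eq_smul, smul_mul_assoc, one_mul]

end HopfAlgebra

theorem normalized_left_integral_iff_normalized_right_integral
    (S : Type*) [CommSemiring S] (H : Type*) [Semiring H] [HopfAlgebra S H] :
    (∃ x : H, (∀ h : H, h * x = Coalgebra.counit (R := S) h • x) ∧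
        Coalgebra.counit (R := S) x = 1) ↔
      (∃ y : H, (∀ h : H, y * h = Coalgebra.counit (R := S) h • y) ∧
        Coalgebra.counit (R := S) y = 1) := by
  constructor
  · rintro ⟨x, hx, hεx⟩
    exact ⟨antipode S x, IsLeftIntegral.isRightIntegral_antipode hx, by
      rw [counit_antipode, hεx]⟩
  · rintro ⟨y, hy, hεy⟩
    exact ⟨antipode S y, IsRightIntegral.isLeftIntegral_antipode hy, by
      rw [counit_antipode, hεy]⟩
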